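/- arXiv:dg-ga/9506004 — 5 statements merged into one kernel-verified Lean document; each statement's English description precedes it below -/
import Mathlib

section
/- Let A = diag(a₁,…,aₙ) with 0 < a₁ < ⋯ < aₙ and let X₀ = diag(ε₁,…,εₙ), εᵢ = ±1, be a critical point of f_A on O(n). In the exponential chart B ↦ X₀·exp(B), B skew-symmetric, the second-order term of f_A(X₀ exp B) - f_A(X₀) equals -∑_{1 ≤ i < j ≤ n} (aᵢεᵢ + aⱼεⱼ)·bᵢⱼ², and in particular the Hessian of f_A at X₀ is nondegenerate with index ∑_{k: ε_k = 1} (k-1). -/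
/-!
For skew-symmetric `B` the diagonal entries vanish and `bⱼᵢ = -bᵢⱼ`, so
`Tr (D B²) = -∑ᵢ ∑ⱼ dᵢ bᵢⱼ²`, and pairing `(i, j)` with `(j, i)` yields the coefficient
`dᵢ + dⱼ` for `i < j`. With `dᵢ = aᵢ εᵢ` and `0 < aᵢ < aⱼ`, the term `aⱼ εⱼ` dominates, so the
coefficient has the sign of `εⱼ`: it never vanishes, and every `j` with `εⱼ = 1` contributes
exactly the pairs `(i, j)` with `i < j`.
-/

open Matrix Finset

theorem sum_sum_eq_sum_lt_add_swap {ι M : Type*} [Fintype ι] [LinearOrder ι] [AddCommMonoid M]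
    (f : ι → ι → M) (hf : ∀ i, f i i = 0) :
    ∑ i, ∑ j, f i j = ∑ p ∈ univ.filter (fun p : ι × ι => p.1 < p.2), (f p.1 p.2 + f p.2 p.1) := by
  have hgt : ∑ p ∈ univ.filter (fun p : ι × ι => ¬p.1 < p.2), f p.1 p.2 =
      ∑ p ∈ univ.filter (fun p : ι × ι => p.2 < p.1), f p.1 p.2 := by
    refine (sum_subset (fun p => by simpa using le_of_lt) fun p hp hp' => ?_).symm
    simp only [mem_filter, mem_univ, true_and, not_lt] at hp hp'
    rw [le_antisymm hp hp', hf]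
  have hswap : ∑ p ∈ univ.filter (fun p : ι × ι => p.2 < p.1), f p.1 p.2 =
      ∑ p ∈ univ.filter (fun p : ι × ι => p.1 < p.2), f p.2 p.1 :=
    sum_equiv (Equiv.prodComm ι ι) (by simp) (by simp)
  rw [← sum_product', univ_product_univ, ← sum_filter_add_sum_filter_not univ (fun p => p.1 < p.2),
    hgt, hswap, sum_add_distrib]

theorem trace_diagonal_mul_mul_self_of_transpose_eq_neg {ι R : Type*} [Fintype ι] [LinearOrder ι]
    [CommRing R] [NoZeroDivisors R] [CharZero R] (d : ι → R) {B : Matrix ι ι R} (hB : Bᵀ = -B) :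
    (diagonal d * (B * B)).trace =
      -∑ p ∈ univ.filter (fun p : ι × ι => p.1 < p.2), (d p.1 + d p.2) * B p.1 p.2 ^ 2 := by
  have hskew : ∀ i j, B j i = -B i j := fun i j => by
    simpa using congrFun (congrFun hB i) j
  have hdiag : ∀ i, B i i = 0 := fun i => CharZero.eq_neg_self_iff.mp (hskew i i)
  calc (diagonal d * (B * B)).trace = -∑ i, ∑ j, d i * B i j ^ 2 := by
        simp only [trace, Matrix.diag, diagonal_mul, mul_apply (M := B), mul_sum,
          ← sum_neg_distrib]
        exact sum_congr rfl fun i _ => sum_congr rfl fun j _ => by rw [hskew i j]; ring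
    _ = _ := by
        rw [sum_sum_eq_sum_lt_add_swap _ fun i => by simp [hdiag], neg_inj]
        exact sum_congr rfl fun p _ => by rw [hskew p.1 p.2]; ring

section SignedSum

variable {R : Type*} [Field R] [LinearOrder R] [IsStrictOrderedRing R] {x y s t : R}

theorem mul_add_mul_ne_zero_of_lt (hx : 0 < x) (hxy : x < y) (hs : s = 1 ∨ s = -1)
    (ht : t = 1 ∨ t = -1) : x * s + y * t ≠ 0 := by
  rcases hs with rfl | rfl <;> rcases ht with rfl | rfl <;> norm_num <;> linarith

theorem mul_add_mul_pos_iff_of_lt (hx : 0 < x) (hxy : x < y) (hs : s = 1 ∨ s = -1)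
    (ht : t = 1 ∨ t = -1) : 0 < x * s + y * t ↔ t = 1 := by
  rcases hs with rfl | rfl <;> rcases ht with rfl | rfl <;> norm_num <;> linarith

end SignedSum

theorem Fin.card_filter_fst_lt_snd_and {n : ℕ} (P : Fin n → Prop) [DecidablePred P] :
    #(univ.filter fun p : Fin n × Fin n => p.1 < p.2 ∧ P p.2) = ∑ k ∈ univ.filter P, (k : ℕ) := by
  rw [card_filter, ← univ_product_univ, sum_product_right, sum_filter]
  refine sum_congr rfl fun j _ => ?_
  split_ifs with hj <;> simp [hj, filter_gt_eq_Iio]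

-- `Fin n` is `0`-based, so the paper's `k - 1` appears as `(k : ℕ)`.
/-- At a critical point `X₀ = diag (ε₁, …, εₙ)` of `f_A`, `A = diag (a₁, …, aₙ)` with
`0 < a₁ < ⋯ < aₙ`, the quadratic (second-order) term of
`f_A(X₀ exp B) - f_A(X₀)` in the skew-symmetric coordinate `B`, namely
`Tr (A X₀ B²)` (up to the overall factor `1/2`), equals
`-∑_{i<j} (aᵢ εᵢ + aⱼ εⱼ) bᵢⱼ²`; in particular all coefficients
`aᵢ εᵢ + aⱼ εⱼ` (`i < j`) are nonzero, so the Hessian is nondegenerate, and its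
index — the number of pairs `i < j` with `aᵢ εᵢ + aⱼ εⱼ > 0` — equals
`∑_{k : ε_k = 1} (k - 1)` (with `1`-based indexing; here `Fin n` is `0`-based, so
the summand is `(k : ℕ)`). -/
theorem hessian_of_height_function (n : ℕ)
    (a ε : Fin n → ℝ) (hpos : ∀ i, 0 < a i) (hmono : StrictMono a)
    (hε : ∀ i, ε i = 1 ∨ ε i = -1) :
    (∀ B : Matrix (Fin n) (Fin n) ℝ, Bᵀ = -B →
      (Matrix.diagonal a * Matrix.diagonal ε * (B * B)).trace =
        -∑ p ∈ Finset.univ.filter (fun p : Fin n × Fin n => p.1 < p.2),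
            (a p.1 * ε p.1 + a p.2 * ε p.2) * (B p.1 p.2) ^ 2) ∧
    (∀ i j : Fin n, i < j → a i * ε i + a j * ε j ≠ 0) ∧
    (Finset.univ.filter
        (fun p : Fin n × Fin n => p.1 < p.2 ∧ 0 < a p.1 * ε p.1 + a p.2 * ε p.2)).card =
      ∑ k ∈ Finset.univ.filter (fun k : Fin n => ε k = 1), (k : ℕ) := by
  refine ⟨fun B hB => ?_, fun i j hij => ?_, ?_⟩
  · rw [diagonal_mul_diagonal]
    exact trace_diagonal_mul_mul_self_of_transpose_eq_neg _ hB
  · exact mul_add_mul_ne_zero_of_lt (hpos i) (hmono hij) (hε i) (hε j)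
  · rw [filter_congr fun p _ => and_congr_right fun h =>
      mul_add_mul_pos_iff_of_lt (hpos p.1) (hmono h) (hε p.1) (hε p.2)]
    exact Fin.card_filter_fst_lt_snd_and (ε · = 1)
end

section
/- The Cayley transform Y = (I - X)(I + X)⁻¹ linearizes the gradient flow Ẋ = A - XAX: if X(t) solves Ẋ = A - XAX and I + X(t) is invertible, then Y(t) = (I - X(t))(I + X(t))⁻¹ satisfies Ẏ = -(AY + YA). -/
open Matrix

attribute [local instance] Matrix.linftyOpNormedAddCommGroup Matrix.linftyOpNormedRing
  Matrix.linftyOpNormedAlgebra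

/-- The Cayley transform `Y = (I - X)(I + X)⁻¹` linearizes the gradient flow
`Ẋ = A - X A X`: if `X(t)` solves it and `I + X(t)` is invertible, then
`Y(t) = (I - X(t))(I + X(t))⁻¹` satisfies `Ẏ = -(A Y + Y A)`. -/
theorem cayley_transform_linearizes_gradient_flow (n : ℕ)
    (A : Matrix (Fin n) (Fin n) ℝ) (X : ℝ → Matrix (Fin n) (Fin n) ℝ)
    (hX : ∀ t, HasDerivAt X (A - X t * A * X t) t)
    (hinv : ∀ t, IsUnit (1 + X t)) :
    ∀ t, HasDerivAt (fun s => (1 - X s) * (1 + X s)⁻¹)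
      (-(A * ((1 - X t) * (1 + X t)⁻¹) + ((1 - X t) * (1 + X t)⁻¹) * A)) t := by
  intro t
  set D : Matrix (Fin n) (Fin n) ℝ := A - X t * A * X t with hD
  obtain ⟨u, hu⟩ := hinv t
  set Z : Matrix (Fin n) (Fin n) ℝ := (1 + X t)⁻¹ with hZ
  have hdet : IsUnit (1 + X t).det := (Matrix.isUnit_iff_isUnit_det _).mp (hinv t)
  have hZu : Z = (↑u⁻¹ : Matrix (Fin n) (Fin n) ℝ) := by
    rw [hZ, ← hu, Matrix.coe_units_inv]
  have h1 : HasDerivAt (fun s => 1 + X s) D t := (hX t).const_add 1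
  have h2 : HasDerivAt (fun s => (1 + X s)⁻¹) (-(Z * D * Z)) t := by
    have hcomp : HasDerivAt (fun s => Ring.inverse (1 + X s))
        ((-ContinuousLinearMap.mulLeftRight ℝ (Matrix (Fin n) (Fin n) ℝ) (↑u⁻¹) (↑u⁻¹)) D) t := by
      have hf := hasFDerivAt_ringInverse (𝕜 := ℝ) u
      rw [hu] at hf
      exact hf.comp_hasDerivAt t h1
    have heq : (fun s => Ring.inverse (1 + X s)) = fun s : ℝ => (1 + X s)⁻¹ := by
      funext s; rw [Matrix.nonsing_inv_eq_ringInverse]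
    rw [heq] at hcomp
    convert hcomp using 1
    simp [hZu, ContinuousLinearMap.mulLeftRight_apply, mul_assoc]
  have h3 : HasDerivAt (fun s => 1 - X s) (-D) t := (hX t).const_sub 1
  have h4 : HasDerivAt (fun s => (1 - X s) * (1 + X s)⁻¹)
      ((-D) * Z + (1 - X t) * (-(Z * D * Z))) t := h3.mul h2
  convert h4 using 1
  -- now the algebraic identity
  have hZl : Z * (1 + X t) = 1 := by rw [hZ]; exact Matrix.nonsing_inv_mul _ hdet
  have hZr : (1 + X t) * Z = 1 := by rw [hZ]; exact Matrix.mul_nonsing_inv _ hdet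
  have hcomm : X t * Z = Z * X t :=
    calc X t * Z = (Z * (1 + X t)) * (X t * Z) := by rw [hZl, one_mul]
    _ = Z * (X t * (1 + X t)) * Z := by noncomm_ring
    _ = (Z * X t) * ((1 + X t) * Z) := by noncomm_ring
    _ = Z * X t := by rw [hZr, mul_one]
  have hYcomm : (1 - X t) * Z = Z * (1 - X t) := by
    simp only [sub_mul, mul_sub, one_mul, mul_one, hcomm]
  have hkey : D + D = (1 + X t) * A * (1 - X t) + (1 - X t) * A * (1 + X t) := by
    rw [hD]; noncomm_ring
  have h2Z : 1 + (1 - X t) * Z = Z + Z := by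
    calc 1 + (1 - X t) * Z = (1 + X t) * Z + (1 - X t) * Z := by rw [hZr]
    _ = Z + Z := by noncomm_ring
  have e1 : (-D) * Z + (1 - X t) * (-(Z * D * Z)) = -((1 + (1 - X t) * Z) * (D * Z)) := by
    noncomm_ring
  rw [e1, h2Z]
  have e2 : -((Z + Z) * (D * Z)) = -(Z * (D + D) * Z) := by noncomm_ring
  rw [e2, hkey]
  have e3 : Z * ((1 + X t) * A * (1 - X t) + (1 - X t) * A * (1 + X t)) * Z
      = (Z * (1 + X t)) * (A * ((1 - X t) * Z)) + (Z * (1 - X t)) * A * ((1 + X t) * Z) := by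
    noncomm_ring
  rw [e3, hZl, hZr, one_mul, mul_one, ← hYcomm]
end

section
/- Let A be a real symmetric matrix and X₀ ∈ O(n). Then X(t) = (sinh(At) + cosh(At)·X₀)·(cosh(At) + sinh(At)·X₀)⁻¹ is well-defined for all t (the matrix cosh(At) + sinh(At)X₀ is invertible), satisfies X(0) = X₀, remains in O(n), and solves the differential equation Ẋ = A - XAX. -/
/-!
Put `E = exp (tA)`, so that `cosh (tA) + sinh (tA) = E` and `cosh (tA) - sinh (tA) = E⁻¹`, with
`E` symmetric. If `(cosh (tA) + sinh (tA) X₀) v = 0`, then `a = (1 + X₀) v` and `b = (1 - X₀) v`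
satisfy `E a + E⁻¹ b = 0`, i.e. `b = -E² a`, while `a ⬝ b = ‖v‖² - ‖X₀ v‖² = 0`; hence
`‖E a‖² = 0`, so `a = b = 0` and `v = 0`. With `N` and `M` the numerator and the denominator,
`cosh² - sinh² = 1` gives `Nᵀ N = Mᵀ M`, so `X = N M⁻¹` is orthogonal. Finally `N' = A M` and
`M' = A N`, and the quotient rule turns this into the Riccati equation `X' = A - X A X`.
-/

open Matrix

attribute [local instance] Matrix.linftyOpNormedAddCommGroup Matrix.linftyOpNormedRing
  Matrix.linftyOpNormedAlgebra

/-- Matrix hyperbolic sine, `sinh M = (exp M - exp (-M))/2`. -/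
noncomputable def matrixSinh {n : ℕ} (M : Matrix (Fin n) (Fin n) ℝ) :
    Matrix (Fin n) (Fin n) ℝ :=
  (1 / 2 : ℝ) • (NormedSpace.exp M - NormedSpace.exp (-M))

/-- Matrix hyperbolic cosine, `cosh M = (exp M + exp (-M))/2`. -/
noncomputable def matrixCosh {n : ℕ} (M : Matrix (Fin n) (Fin n) ℝ) :
    Matrix (Fin n) (Fin n) ℝ :=
  (1 / 2 : ℝ) • (NormedSpace.exp M + NormedSpace.exp (-M))

namespace Matrix

variable {m R : Type*} [Fintype m] [DecidableEq m]

theorem exp_mul_exp_neg {𝔸 : Type*} [NormedRing 𝔸] [NormedAlgebra ℚ 𝔸] [CompleteSpace 𝔸]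
    (M : Matrix m m 𝔸) : NormedSpace.exp M * NormedSpace.exp (-M) = 1 := by
  rw [← exp_add_of_commute _ _ (Commute.refl M).neg_right, add_neg_cancel,
    NormedSpace.exp_zero]

theorem transpose_mul_self_add_mul_swap [CommRing R] {C S X : Matrix m m R}
    (hC : Cᵀ = C) (hS : Sᵀ = S) (hCS : Commute C S) (hCS2 : C * C = 1 + S * S)
    (hX : Xᵀ * X = 1) :
    (S + C * X)ᵀ * (S + C * X) = (C + S * X)ᵀ * (C + S * X) := by
  simp only [transpose_add, transpose_mul, hC, hS]
  have lhs : (S + Xᵀ * C) * (S + C * X)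
      = S * S + (S * C) * X + Xᵀ * (C * S) + Xᵀ * ((C * C) * X) := by noncomm_ring
  have rhs : (C + Xᵀ * S) * (C + S * X)
      = C * C + (C * S) * X + Xᵀ * (S * C) + Xᵀ * ((S * S) * X) := by noncomm_ring
  rw [lhs, rhs, hCS.eq, hCS2, add_mul, one_mul, mul_add, hX]
  abel

theorem transpose_mul_self_mul_inv_eq_one [CommRing R] {M N : Matrix m m R}
    (hNM : Nᵀ * N = Mᵀ * M) (hM : IsUnit M) : (N * M⁻¹)ᵀ * (N * M⁻¹) = 1 := by
  have hdet : IsUnit M.det := (isUnit_iff_isUnit_det M).mp hM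
  have hdetT : IsUnit Mᵀ.det := by rwa [det_transpose]
  calc (N * M⁻¹)ᵀ * (N * M⁻¹) = (Mᵀ)⁻¹ * (Nᵀ * N) * M⁻¹ := by
        rw [transpose_mul, transpose_nonsing_inv]; simp only [mul_assoc]
    _ = ((Mᵀ)⁻¹ * Mᵀ) * (M * M⁻¹) := by rw [hNM]; simp only [mul_assoc]
    _ = 1 := by rw [nonsing_inv_mul _ hdetT, mul_nonsing_inv _ hdet, one_mul]

theorem isUnit_add_mul_of_orthogonal [Field R] [LinearOrder R] [IsStrictOrderedRing R]
    {C S X : Matrix m m R} (hP : (C + S)ᵀ = C + S) (hPQ : (C + S) * (C - S) = 1)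
    (hX : Xᵀ * X = 1) : IsUnit (C + S * X) := by
  rw [isUnit_iff_isUnit_det, isUnit_iff_ne_zero, Ne, ← exists_mulVec_eq_zero_iff]
  rintro ⟨v, hv0, hv⟩
  apply hv0
  set P := C + S
  set a := v + X *ᵥ v
  set b := v - X *ᵥ v
  have hsum : P *ᵥ a + (C - S) *ᵥ b = 0 := by
    have hsum_eq : P *ᵥ a + (C - S) *ᵥ b = (2 : R) • ((C + S * X) *ᵥ v) := by
      simp only [P, a, b, add_mul, sub_mul, mulVec_add, mulVec_sub, add_mulVec, sub_mulVec,
        mulVec_mulVec]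
      module
    rw [hsum_eq, hv, smul_zero]
  have hb : b = -(P *ᵥ (P *ᵥ a)) := by
    have hPsum := congrArg (P *ᵥ ·) hsum
    simp only [mulVec_add, mulVec_mulVec, hPQ, one_mulVec, mulVec_zero] at hPsum
    rw [mulVec_mulVec]; exact eq_neg_of_add_eq_zero_right hPsum
  have horth : a ⬝ᵥ b = 0 := by
    have hXX : (X *ᵥ v) ⬝ᵥ (X *ᵥ v) = v ⬝ᵥ v := by
      rw [dotProduct_mulVec, ← vecMul_transpose, vecMul_vecMul, hX, vecMul_one]
    simp only [a, b, add_dotProduct, dotProduct_sub, hXX, dotProduct_comm v (X *ᵥ v)]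
    ring
  have hPa : P *ᵥ a = 0 := by
    rw [← dotProduct_self_eq_zero, ← neg_eq_zero, ← horth, hb, dotProduct_neg,
      dotProduct_mulVec a P, ← mulVec_transpose, hP]
  have ha : a = 0 := by
    rw [← one_mulVec a, ← mul_eq_one_comm.mp hPQ, ← mulVec_mulVec, hPa, mulVec_zero]
  have hb0 : b = 0 := by rw [hb, ha, mulVec_zero, mulVec_zero, neg_zero]
  have htwo : (2 : R) • v = a + b := by simp only [a, b]; module
  rw [ha, hb0, add_zero] at htwo
  exact (smul_eq_zero.mp htwo).resolve_left two_ne_zero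

end Matrix

section RingInverse

variable {𝕜 R : Type*} [NontriviallyNormedField 𝕜] [NormedRing R] [HasSummableGeomSeries R]
  [NormedAlgebra 𝕜 R] {f g : 𝕜 → R} {f' a : R} {t : 𝕜}

theorem HasDerivAt.ringInverse (hf : HasDerivAt f f' t) (ht : IsUnit (f t)) :
    HasDerivAt (fun s => Ring.inverse (f s))
      (-(Ring.inverse (f t) * f' * Ring.inverse (f t))) t := by
  obtain ⟨u, hu⟩ := ht
  have hinv := hasFDerivAt_ringInverse (𝕜 := 𝕜) u
  rw [hu] at hinv
  rw [← hu, Ring.inverse_unit]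
  exact hinv.comp_hasDerivAt t hf

theorem HasDerivAt.mul_ringInverse_riccati (hf : HasDerivAt f (a * g t) t)
    (hg : HasDerivAt g (a * f t) t) (ht : IsUnit (g t)) :
    HasDerivAt (fun s => f s * Ring.inverse (g s))
      (a - f t * Ring.inverse (g t) * a * (f t * Ring.inverse (g t))) t := by
  refine (hf.mul (hg.ringInverse ht)).congr_deriv ?_
  rw [mul_assoc, Ring.mul_inverse_cancel _ ht]
  noncomm_ring

end RingInverse

section Hyperbolic

variable {n : ℕ}

theorem matrixCosh_add_matrixSinh (M : Matrix (Fin n) (Fin n) ℝ) :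
    matrixCosh M + matrixSinh M = NormedSpace.exp M := by
  rw [matrixCosh, matrixSinh, ← smul_add]; module

theorem matrixCosh_sub_matrixSinh (M : Matrix (Fin n) (Fin n) ℝ) :
    matrixCosh M - matrixSinh M = NormedSpace.exp (-M) := by
  rw [matrixCosh, matrixSinh, ← smul_sub]; module

theorem transpose_matrixCosh (M : Matrix (Fin n) (Fin n) ℝ) :
    (matrixCosh M)ᵀ = matrixCosh Mᵀ := by
  rw [matrixCosh, matrixCosh, transpose_smul, transpose_add, ← Matrix.exp_transpose,
    ← Matrix.exp_transpose, transpose_neg]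

theorem transpose_matrixSinh (M : Matrix (Fin n) (Fin n) ℝ) :
    (matrixSinh M)ᵀ = matrixSinh Mᵀ := by
  rw [matrixSinh, matrixSinh, transpose_smul, transpose_sub, ← Matrix.exp_transpose,
    ← Matrix.exp_transpose, transpose_neg]

theorem commute_matrixCosh_matrixSinh (M : Matrix (Fin n) (Fin n) ℝ) :
    Commute (matrixCosh M) (matrixSinh M) := by
  have h := (Commute.refl M).neg_right.exp
  exact (((Commute.refl _).add_left h.symm).sub_right
    (h.add_left (Commute.refl _))).smul_left _ |>.smul_right _

theorem matrixCosh_mul_self (M : Matrix (Fin n) (Fin n) ℝ) :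
    matrixCosh M * matrixCosh M = 1 + matrixSinh M * matrixSinh M := by
  rw [← sub_eq_iff_eq_add, (commute_matrixCosh_matrixSinh M).mul_self_sub_mul_self_eq,
    matrixCosh_add_matrixSinh, matrixCosh_sub_matrixSinh, exp_mul_exp_neg]

@[simp]
theorem matrixCosh_zero : matrixCosh (0 : Matrix (Fin n) (Fin n) ℝ) = 1 := by
  rw [matrixCosh, neg_zero, NormedSpace.exp_zero]; module

@[simp]
theorem matrixSinh_zero : matrixSinh (0 : Matrix (Fin n) (Fin n) ℝ) = 0 := by
  rw [matrixSinh, neg_zero, sub_self, smul_zero]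

theorem hasDerivAt_matrixSinh_smul (A : Matrix (Fin n) (Fin n) ℝ) (t : ℝ) :
    HasDerivAt (fun s : ℝ => matrixSinh (s • A)) (A * matrixCosh (t • A)) t := by
  have hexp := hasDerivAt_exp_smul_const' (𝕂 := ℝ) A t
  have hexp_neg := hasDerivAt_exp_smul_const' (𝕂 := ℝ) (-A) t
  simp only [smul_neg] at hexp_neg
  refine ((hexp.sub hexp_neg).const_smul (1 / 2 : ℝ)).congr_deriv ?_
  rw [matrixCosh, mul_smul_comm, mul_add, neg_mul, sub_neg_eq_add]
  rfl

theorem hasDerivAt_matrixCosh_smul (A : Matrix (Fin n) (Fin n) ℝ) (t : ℝ) :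
    HasDerivAt (fun s : ℝ => matrixCosh (s • A)) (A * matrixSinh (t • A)) t := by
  have hexp := hasDerivAt_exp_smul_const' (𝕂 := ℝ) A t
  have hexp_neg := hasDerivAt_exp_smul_const' (𝕂 := ℝ) (-A) t
  simp only [smul_neg] at hexp_neg
  refine ((hexp.add hexp_neg).const_smul (1 / 2 : ℝ)).congr_deriv ?_
  rw [matrixSinh, mul_smul_comm, mul_sub, neg_mul, sub_eq_add_neg]
  rfl

end Hyperbolic

/-- For `A` symmetric and `X₀ ∈ O(n)`, the matrix `cosh(At) + sinh(At) X₀` is invertible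
for all `t`, and `X(t) = (sinh(At) + cosh(At) X₀)(cosh(At) + sinh(At) X₀)⁻¹` satisfies
`X(0) = X₀`, stays in `O(n)`, and solves `Ẋ = A - X A X`. -/
theorem explicit_solution_of_gradient_flow (n : ℕ)
    (A X₀ : Matrix (Fin n) (Fin n) ℝ) (hA : Aᵀ = A) (hX₀ : X₀ᵀ * X₀ = 1) :
    (∀ t : ℝ, IsUnit (matrixCosh (t • A) + matrixSinh (t • A) * X₀)) ∧
    (fun t : ℝ => (matrixSinh (t • A) + matrixCosh (t • A) * X₀) *
        (matrixCosh (t • A) + matrixSinh (t • A) * X₀)⁻¹) 0 = X₀ ∧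
    (∀ t : ℝ,
      ((matrixSinh (t • A) + matrixCosh (t • A) * X₀) *
          (matrixCosh (t • A) + matrixSinh (t • A) * X₀)⁻¹)ᵀ *
        ((matrixSinh (t • A) + matrixCosh (t • A) * X₀) *
          (matrixCosh (t • A) + matrixSinh (t • A) * X₀)⁻¹) = 1) ∧
    (∀ t : ℝ, HasDerivAt
      (fun s : ℝ => (matrixSinh (s • A) + matrixCosh (s • A) * X₀) *
        (matrixCosh (s • A) + matrixSinh (s • A) * X₀)⁻¹)
      (A - ((matrixSinh (t • A) + matrixCosh (t • A) * X₀) *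
              (matrixCosh (t • A) + matrixSinh (t • A) * X₀)⁻¹) * A *
            ((matrixSinh (t • A) + matrixCosh (t • A) * X₀) *
              (matrixCosh (t • A) + matrixSinh (t • A) * X₀)⁻¹)) t) := by
  have hsymm (t : ℝ) : (t • A)ᵀ = t • A := by rw [transpose_smul, hA]
  have hC (t : ℝ) : (matrixCosh (t • A))ᵀ = matrixCosh (t • A) := by
    rw [transpose_matrixCosh, hsymm]
  have hS (t : ℝ) : (matrixSinh (t • A))ᵀ = matrixSinh (t • A) := by
    rw [transpose_matrixSinh, hsymm]
  have hunit (t : ℝ) : IsUnit (matrixCosh (t • A) + matrixSinh (t • A) * X₀) := by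
    refine isUnit_add_mul_of_orthogonal ?_ ?_ hX₀
    · rw [transpose_add, hC, hS]
    · rw [matrixCosh_add_matrixSinh, matrixCosh_sub_matrixSinh, exp_mul_exp_neg]
  refine ⟨hunit, by simp, fun t => ?_, fun t => ?_⟩
  · exact transpose_mul_self_mul_inv_eq_one (transpose_mul_self_add_mul_swap (hC t) (hS t)
      (commute_matrixCosh_matrixSinh _) (matrixCosh_mul_self _) hX₀) (hunit t)
  · simp only [nonsing_inv_eq_ringInverse]
    have hN := (hasDerivAt_matrixSinh_smul A t).add
      ((hasDerivAt_matrixCosh_smul A t).mul_const X₀)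
    have hM := (hasDerivAt_matrixCosh_smul A t).add
      ((hasDerivAt_matrixSinh_smul A t).mul_const X₀)
    rw [mul_assoc, ← mul_add] at hN hM
    exact hN.mul_ringInverse_riccati hM (hunit t)
end

section
/- Let X(t) solve Ẋ = A - XAX on O(n) with A symmetric, given by the explicit formula X(t) = (sinh(At) + cosh(At)X₀)(cosh(At) + sinh(At)X₀)⁻¹. If V₋(0) is contained in the (-1)-eigenspace of X₀, then exp(-At)·V₋(0) is contained in the (-1)-eigenspace of X(t); that is, X(t)·exp(-At)v = -exp(-At)v for every v with X₀v = -v. -/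
open Matrix

/-!
Put `M = tA`, `E = exp M` and `Q = cosh M + sinh M X₀`. If `X₀ v = -v`, then `Q` acts on `v` as
`exp(-M)` and `sinh M + cosh M X₀` acts as `-exp(-M)`; so `X(t) (exp(-M) v) = X(t) Q v = -exp(-M) v`
once `Q` is invertible. For invertibility, `2 E Q = E² (1 + X₀) + (1 - X₀)` with `E²` positive
definite for symmetric `M`. If `Q x = 0`, then `u = (1 + X₀) x` and `w = (1 - X₀) x` are orthogonal
because `X₀` is orthogonal, and `E² u + w = 0` gives `⟪u, E² u⟫ = -⟪u, w⟫ = 0`, so `u = w = 0`.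
-/

open NormedSpace

namespace Matrix

variable {ι : Type*} [Fintype ι]

lemma add_mulVec_dotProduct_sub_mulVec_of_transpose_mul_self [DecidableEq ι] {R : Type*}
    [CommRing R] {X : Matrix ι ι R} (hX : Xᵀ * X = 1) (x : ι → R) :
    (x + X *ᵥ x) ⬝ᵥ (x - X *ᵥ x) = 0 := by
  have hnorm : (X *ᵥ x) ⬝ᵥ (X *ᵥ x) = x ⬝ᵥ x := by
    rw [dotProduct_mulVec, ← mulVec_transpose, mulVec_mulVec, hX, one_mulVec]
  simp only [add_dotProduct, dotProduct_sub, hnorm, dotProduct_comm (X *ᵥ x) x]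
  ring

lemma eq_zero_of_posDef_mulVec_add_eq_zero {P : Matrix ι ι ℝ} (hP : P.PosDef)
    {u w : ι → ℝ} (horth : u ⬝ᵥ w = 0) (h : P *ᵥ u + w = 0) : u = 0 := by
  by_contra hu
  have hpos := hP.dotProduct_mulVec_pos hu
  rw [star_trivial, eq_neg_of_add_eq_zero_left h, dotProduct_neg, horth, neg_zero] at hpos
  exact hpos.false

variable [DecidableEq ι]

lemma eq_zero_of_posDef_mul_add_mulVec_eq_zero {P X : Matrix ι ι ℝ} (hP : P.PosDef)
    (hX : Xᵀ * X = 1) {x : ι → ℝ} (h : (P * (1 + X) + (1 - X)) *ᵥ x = 0) : x = 0 := by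
  set u := x + X *ᵥ x
  set w := x - X *ᵥ x
  have hPuw : P *ᵥ u + w = 0 := by
    rw [← h]
    simp only [u, w, add_mulVec, sub_mulVec, mulVec_add, one_mulVec, ← mulVec_mulVec]
  have hu : u = 0 :=
    eq_zero_of_posDef_mulVec_add_eq_zero hP
      (add_mulVec_dotProduct_sub_mulVec_of_transpose_mul_self hX x) hPuw
  have hw : w = 0 := by rwa [hu, mulVec_zero, zero_add] at hPuw
  have hx : (2 : ℝ) • x = u + w := by simp only [u, w]; module
  rwa [hu, hw, add_zero, smul_eq_zero_iff_right two_ne_zero] at hx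

lemma exp_mul_exp_neg_s11 (M : Matrix ι ι ℝ) : exp M * exp (-M) = 1 := by
  rw [← exp_add_of_commute _ _ (Commute.neg_right (Commute.refl M)), add_neg_cancel, exp_zero]

end Matrix

section flow

variable {n : ℕ}

lemma two_smul_exp_mul_matrixCosh_add_matrixSinh_mul (M X : Matrix (Fin n) (Fin n) ℝ) :
    (2 : ℝ) • (exp M * (matrixCosh M + matrixSinh M * X)) =
      exp M * exp M * (1 + X) + (1 - X) := by
  simp only [matrixCosh, matrixSinh, mul_add, smul_add, sub_mul, mul_sub, mul_smul_comm,
    smul_mul_assoc, ← mul_assoc, exp_mul_exp_neg_s11, one_mul, mul_one]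
  module

lemma isUnit_matrixCosh_add_matrixSinh_mul {M X : Matrix (Fin n) (Fin n) ℝ} (hM : Mᵀ = M)
    (hX : Xᵀ * X = 1) : IsUnit (matrixCosh M + matrixSinh M * X) := by
  have hP : (exp M * exp M).PosDef := by
    have h := PosDef.conjTranspose_mul_self (exp M) (mulVec_injective_of_isUnit (isUnit_exp M))
    rwa [conjTranspose_eq_transpose_of_trivial, ← exp_transpose, hM] at h
  rw [isUnit_iff_isUnit_det, isUnit_iff_ne_zero]
  intro hdet
  obtain ⟨x, hx0, hx⟩ := exists_mulVec_eq_zero_iff.2 hdet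
  refine hx0 (eq_zero_of_posDef_mul_add_mulVec_eq_zero hP hX ?_)
  rw [← two_smul_exp_mul_matrixCosh_add_matrixSinh_mul, smul_mulVec, ← mulVec_mulVec, hx,
    mulVec_zero, smul_zero]

lemma matrixCosh_add_matrixSinh_mul_mulVec_of_mulVec_eq_neg (M : Matrix (Fin n) (Fin n) ℝ)
    {X : Matrix (Fin n) (Fin n) ℝ} {v : Fin n → ℝ} (hv : X *ᵥ v = -v) :
    (matrixCosh M + matrixSinh M * X) *ᵥ v = exp (-M) *ᵥ v := by
  rw [add_mulVec, ← mulVec_mulVec, hv]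
  simp only [matrixCosh, matrixSinh, smul_mulVec, add_mulVec, sub_mulVec, mulVec_neg]
  module

lemma matrixSinh_add_matrixCosh_mul_mulVec_of_mulVec_eq_neg (M : Matrix (Fin n) (Fin n) ℝ)
    {X : Matrix (Fin n) (Fin n) ℝ} {v : Fin n → ℝ} (hv : X *ᵥ v = -v) :
    (matrixSinh M + matrixCosh M * X) *ᵥ v = -(exp (-M) *ᵥ v) := by
  rw [add_mulVec, ← mulVec_mulVec, hv]
  simp only [matrixCosh, matrixSinh, smul_mulVec, add_mulVec, sub_mulVec, mulVec_neg]
  module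

end flow

/-- The gradient flow `X(t) = (sinh(At) + cosh(At)X₀)(cosh(At) + sinh(At)X₀)⁻¹` moves the
`(-1)`-eigenspace by `exp(-At)`: if `X₀ v = -v` then `X(t)(exp(-At) v) = -exp(-At) v`. -/
theorem gradient_flow_moves_minus_one_eigenspace (n : ℕ)
    (A X₀ : Matrix (Fin n) (Fin n) ℝ) (hA : Aᵀ = A) (hX₀ : X₀ᵀ * X₀ = 1)
    (v : Fin n → ℝ) (hv : X₀ *ᵥ v = -v) :
    ∀ t : ℝ,
      ((matrixSinh (t • A) + matrixCosh (t • A) * X₀) *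
          (matrixCosh (t • A) + matrixSinh (t • A) * X₀)⁻¹) *ᵥ
        (NormedSpace.exp (-(t • A)) *ᵥ v) =
      -(NormedSpace.exp (-(t • A)) *ᵥ v) := by
  intro t
  have hQ := isUnit_matrixCosh_add_matrixSinh_mul (M := t • A) (by rw [transpose_smul, hA]) hX₀
  have hQv := matrixCosh_add_matrixSinh_mul_mulVec_of_mulVec_eq_neg (t • A) hv
  rw [← hQv, mulVec_mulVec, mul_assoc, nonsing_inv_mul _ ((isUnit_iff_isUnit_det _).1 hQ),
    mul_one, matrixSinh_add_matrixCosh_mul_mulVec_of_mulVec_eq_neg _ hv, hQv]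
end

section
/- On the set S of real symmetric n×n matrices X with Tr X = 0 and Tr X² = 1 (a sphere), a matrix X is a critical point of f(X) = (1/3)Tr X³ restricted to S if and only if X has exactly two distinct eigenvalues, namely μ₁ = -√((n-m)/(nm)) with multiplicity m and μ₂ = √(m/(n(n-m))) with multiplicity n-m, for some 1 ≤ m ≤ n-1. -/
/-!
Test criticality against `V = X² - t X - I / n` with `t = Tr X³`: it is symmetric and tangent to
`S` at `X`, and `Tr V² = Tr (X² V) - t Tr (X V) - Tr V / n = 0`, so `X² = t X + I / n`. Hence
all eigenvalues are roots of one quadratic; as they sum to `0` and their squares to `1`, they take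
exactly two values `a < 0 < b`, and if `a` has multiplicity `m` then `m a + (n - m) b = 0` and
`m a² + (n - m) b² = 1` determine `a` and `b`. Conversely, if `X` has only the eigenvalues `a, b`
then `X² = (a + b) X - a b I`, so `Tr (X² V) = (a + b) Tr (X V) - a b Tr V` vanishes on the
tangent space.
-/

open Matrix Finset

theorem eq_or_eq_of_mul_self_eq {K : Type*} [Field K] {t c x y z : K}
    (hx : x * x = t * x + c) (hy : y * y = t * y + c) (hz : z * z = t * z + c) (hyz : y ≠ z) :
    x = y ∨ x = z := by
  have hsum : y + z = t := by
    have : (y - z) * (y + z - t) = 0 := by linear_combination hy - hz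
    linear_combination (mul_eq_zero.1 this).resolve_left (sub_ne_zero.2 hyz)
  have : (x - y) * (x - z) = 0 := by linear_combination hx - x * hsum + y * hsum - hy
  rcases mul_eq_zero.1 this with h | h
  · exact .inl (sub_eq_zero.1 h)
  · exact .inr (sub_eq_zero.1 h)

theorem mul_self_eq_of_eq_or_eq {R : Type*} [CommRing R] {x a b : R} (h : x = a ∨ x = b) :
    x * x = (a + b) * x + -(a * b) := by
  rcases h with rfl | rfl <;> ring

theorem exists_neg_and_pos_of_sum_eq_zero {ι : Type*} [Fintype ι] {f : ι → ℝ}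
    (hsum : ∑ i, f i = 0) (hf : f ≠ 0) : (∃ i, f i < 0) ∧ ∃ j, 0 < f j := by
  obtain ⟨k, hk⟩ := Function.ne_iff.1 hf
  constructor
  · obtain ⟨i, -, hi⟩ := exists_pos_of_sum_zero_of_exists_nonzero (-f)
      (by simp [hsum]) ⟨k, mem_univ k, by simpa using hk⟩
    exact ⟨i, by simpa using hi⟩
  · obtain ⟨j, -, hj⟩ := exists_pos_of_sum_zero_of_exists_nonzero f hsum ⟨k, mem_univ k, hk⟩
    exact ⟨j, hj⟩

theorem eq_neg_sqrt_and_eq_sqrt_of_moments {m n a b : ℝ} (hm : 0 < m) (hmn : m < n)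
    (ha : a < 0) (hb : 0 < b) (h1 : m * a + (n - m) * b = 0)
    (h2 : m * (a * a) + (n - m) * (b * b) = 1) :
    a = -√((n - m) / (n * m)) ∧ b = √(m / (n * (n - m))) := by
  have hnm : 0 < n - m := sub_pos.2 hmn
  have hsq : (n - m) * b * ((n - m) * b) = m * a * (m * a) := by
    rw [show (n - m) * b = -(m * a) by linarith]; ring
  constructor
  · have : (n - m) / (n * m) = a ^ 2 := by
      rw [div_eq_iff (mul_pos (hm.trans hmn) hm).ne']
      linear_combination hsq - (n - m) * h2
    rw [this, Real.sqrt_sq_eq_abs, abs_of_neg ha, neg_neg]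
  · have : m / (n * (n - m)) = b ^ 2 := by
      rw [div_eq_iff (mul_pos (hm.trans hmn) hnm).ne']
      linear_combination -m * h2 - hsq
    rw [this, Real.sqrt_sq_eq_abs, abs_of_pos hb]

theorem Fin.exists_perm_iff_val_lt {n : ℕ} (p : Fin n → Prop) [DecidablePred p] :
    ∃ σ : Equiv.Perm (Fin n), ∀ i, p (σ i) ↔ (i : ℕ) < #{i | p i} := by
  set s : Finset (Fin n) := {i | p i}
  have hn : n = #s + #sᶜ := by rw [card_add_card_compl, Fintype.card_fin]
  let σ : Equiv.Perm (Fin n) :=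
    (finCongr hn).trans (finSumFinEquiv.symm.trans (finSumEquivOfFinset rfl rfl))
  refine ⟨σ, fun i => ?_⟩
  obtain ⟨j, hj⟩ | ⟨j, hj⟩ : (∃ j : Fin #s, finCongr hn i = Fin.castAdd _ j) ∨
      ∃ j : Fin #sᶜ, finCongr hn i = Fin.natAdd _ j := by
    induction finCongr hn i using Fin.addCases with
    | left j => exact .inl ⟨j, rfl⟩
    | right j => exact .inr ⟨j, rfl⟩
  · have : σ i ∈ s := by simp [σ, hj, finSumFinEquiv_symm_apply_castAdd]
    have hi : (i : ℕ) = j := by simpa using congrArg Fin.val hj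
    simpa [s, hi] using this
  · have : σ i ∈ sᶜ := by simp [σ, hj, finSumFinEquiv_symm_apply_natAdd]
    have hi : (i : ℕ) = #s + j := by simpa using congrArg Fin.val hj
    simpa [s, hi] using this

theorem Fin.sum_ite_val_lt {M : Type*} [AddCommMonoid M] {n m : ℕ} (hm : m ≤ n) (a b : M) :
    ∑ i : Fin n, (if (i : ℕ) < m then a else b) = m • a + (n - m) • b := by
  rw [sum_ite, Finset.sum_const, Finset.sum_const, filter_not,
    card_sdiff_of_subset (filter_subset _ _), Fin.card_filter_val_lt, card_univ,
    Fintype.card_fin, min_eq_right hm]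

theorem Fin.exists_perm_eq_ite_of_mul_self_eq {n : ℕ} {f : Fin n → ℝ} {t c : ℝ}
    (hf : ∀ i, f i * f i = t * f i + c) (hsum : ∑ i, f i = 0) (hsq : ∑ i, f i * f i = 1) :
    ∃ m : ℕ, 1 ≤ m ∧ m ≤ n - 1 ∧ ∃ σ : Equiv.Perm (Fin n), ∀ i, f (σ i) =
      if (i : ℕ) < m then -√(((n : ℝ) - m) / (n * m)) else √((m : ℝ) / (n * ((n : ℝ) - m))) := by
  obtain ⟨⟨i₀, ha⟩, ⟨j₀, hb⟩⟩ :=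
    exists_neg_and_pos_of_sum_eq_zero hsum (by rintro rfl; simp at hsq)
  have hab : f i₀ ≠ f j₀ := (ha.trans hb).ne
  obtain ⟨σ, hσ⟩ := Fin.exists_perm_iff_val_lt (f · = f i₀)
  set m := #{i | f i = f i₀}
  have hfσ : ∀ i, f (σ i) = if (i : ℕ) < m then f i₀ else f j₀ := by
    intro i
    split_ifs with h
    · exact (hσ i).2 h
    · exact (eq_or_eq_of_mul_self_eq (hf _) (hf i₀) (hf j₀) hab).resolve_left (mt (hσ i).1 h)
  have hm : 0 < m := card_pos.2 ⟨i₀, by simp⟩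
  have hmn : m < n := by
    simpa using card_lt_univ_of_notMem (s := {i | f i = f i₀}) (x := j₀) (by simpa using hab.symm)
  have hmoment : ∀ g : ℝ → ℝ, ∑ i, g (f i) = m * g (f i₀) + (n - m) * g (f j₀) := by
    intro g
    rw [← Equiv.sum_comp σ]
    simp only [hfσ, apply_ite g]
    rw [Fin.sum_ite_val_lt hmn.le, nsmul_eq_mul, nsmul_eq_mul, Nat.cast_sub hmn.le]
  obtain ⟨ha', hb'⟩ := eq_neg_sqrt_and_eq_sqrt_of_moments (by exact_mod_cast hm)
    (by exact_mod_cast hmn) ha hb ((hmoment id).symm.trans hsum)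
    ((hmoment fun x => x * x).symm.trans hsq)
  exact ⟨m, hm, by omega, σ, fun i => by rw [hfσ, ha', hb']⟩

theorem map_mul_self_eq {F R A B : Type*} [CommSemiring R] [Semiring A] [Semiring B]
    [Algebra R A] [Algebra R B] [FunLike F A B] [AlgHomClass F R A B] (φ : F) {a : A} {s c : R}
    (h : a * a = s • a + c • 1) : φ a * φ a = s • φ a + c • 1 := by
  rw [← map_mul, h, map_add, map_smul, map_smul, map_one]

namespace Matrix

variable {ι : Type*} [Fintype ι] [DecidableEq ι]

theorem diagonal_mul_self_eq_iff {R : Type*} [CommRing R] {d : ι → R} {s c : R} :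
    diagonal d * diagonal d = s • diagonal d + c • 1 ↔ ∀ i, d i * d i = s * d i + c := by
  rw [diagonal_mul_diagonal, ← diagonal_one, ← diagonal_smul, ← diagonal_smul, diagonal_add,
    diagonal_injective.eq_iff, funext_iff]
  simp

theorem trace_mul_mul_transpose {R : Type*} [CommRing R] {P A : Matrix ι ι R}
    (hP : Pᵀ * P = 1) : (P * A * Pᵀ).trace = A.trace := by
  rw [trace_mul_cycle, hP, Matrix.one_mul]

theorem mul_mul_transpose_mul_mul_mul_transpose {R : Type*} [CommRing R]
    {P A B : Matrix ι ι R} (hP : Pᵀ * P = 1) : P * A * Pᵀ * (P * B * Pᵀ) = P * (A * B) * Pᵀ := by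
  simp only [Matrix.mul_assoc]
  rw [← Matrix.mul_assoc Pᵀ, hP, Matrix.one_mul]

theorem mul_self_eq_of_transpose_mul_self_eq_one {P A : Matrix ι ι ℝ} {s c : ℝ}
    (hP : Pᵀ * P = 1) (h : A * A = s • A + c • 1) :
    P * A * Pᵀ * (P * A * Pᵀ) = s • (P * A * Pᵀ) + c • 1 := by
  have hu : P ∈ unitary (Matrix ι ι ℝ) := (mem_orthogonalGroup_iff' ι ℝ).2 hP
  simpa [star_eq_conjTranspose] using map_mul_self_eq (Unitary.conjStarAlgAut ℝ _ ⟨P, hu⟩) h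

theorem mul_self_eq_of_eq_mul_diagonal_mul_transpose {X U : Matrix ι ι ℝ} {f : ι → ℝ}
    {s c : ℝ} (hU : Uᵀ * U = 1) (hX : X = U * diagonal f * Uᵀ) (h : X * X = s • X + c • 1)
    (i : ι) : f i * f i = s * f i + c := by
  have hD : Uᵀ * X * Uᵀᵀ = diagonal f := by
    rw [hX, ← Matrix.mul_assoc, ← Matrix.mul_assoc, hU, Matrix.one_mul, Matrix.mul_assoc,
      transpose_transpose, hU, Matrix.mul_one]
  have hUt : Uᵀᵀ * Uᵀ = 1 := by rw [transpose_transpose, mul_eq_one_comm, hU]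
  exact diagonal_mul_self_eq_iff.1 (hD ▸ mul_self_eq_of_transpose_mul_self_eq_one hUt h) i

theorem exists_eq_mul_diagonal_mul_transpose_of_transpose_eq {X : Matrix ι ι ℝ}
    (hsymm : Xᵀ = X) : ∃ (U : Matrix ι ι ℝ) (f : ι → ℝ), Uᵀ * U = 1 ∧ X = U * diagonal f * Uᵀ := by
  have hX : X.IsHermitian := by rwa [IsHermitian, conjTranspose_eq_transpose_of_trivial]
  refine ⟨hX.eigenvectorUnitary, hX.eigenvalues, ?_, ?_⟩
  · simpa [star_eq_conjTranspose] using Unitary.coe_star_mul_self hX.eigenvectorUnitary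
  · simpa [star_eq_conjTranspose, RCLike.ofReal_real_eq_id] using hX.spectral_theorem

theorem eq_mul_diagonal_comp_perm_mul_transpose {R : Type*} [CommRing R]
    {X U : Matrix ι ι R} {f : ι → R} (hU : Uᵀ * U = 1) (hX : X = U * diagonal f * Uᵀ)
    (σ : Equiv.Perm ι) :
    (U.submatrix id σ)ᵀ * U.submatrix id σ = 1 ∧
      X = U.submatrix id σ * diagonal (f ∘ σ) * (U.submatrix id σ)ᵀ := by
  constructor
  · rw [transpose_submatrix, ← submatrix_mul _ _ _ _ _ Function.bijective_id, hU,
      submatrix_one_equiv]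
  · rw [transpose_submatrix, ← submatrix_diagonal_equiv, submatrix_mul_equiv,
      submatrix_mul_equiv, submatrix_id_id, hX]

end Matrix

section TraceCube

variable {ι : Type*} [Fintype ι] [DecidableEq ι]

def IsTraceCubeCritical (X : Matrix ι ι ℝ) : Prop :=
  ∀ V : Matrix ι ι ℝ, Vᵀ = V → V.trace = 0 → (X * V).trace = 0 → (X * X * V).trace = 0

theorem IsTraceCubeCritical.mul_self_eq {X : Matrix ι ι ℝ} (hX : IsTraceCubeCritical X)
    (hsymm : Xᵀ = X) (htr : X.trace = 0) (htr2 : (X * X).trace = 1) :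
    X * X = (X * X * X).trace • X + (Fintype.card ι : ℝ)⁻¹ • 1 := by
  set t := (X * X * X).trace
  have hcard : (Fintype.card ι : ℝ) ≠ 0 := by
    intro h
    have : IsEmpty ι := Fintype.card_eq_zero_iff.1 (by exact_mod_cast h)
    simp [Matrix.trace] at htr2
  set V := X * X - t • X - (Fintype.card ι : ℝ)⁻¹ • 1 with hVdef
  have hVsymm : Vᵀ = V := by simp [V, transpose_sub, transpose_mul, hsymm]
  have hV : V.trace = 0 := by simp [V, htr, htr2, hcard]
  have hXV : (X * V).trace = 0 := by
    simp [V, Matrix.mul_sub, htr, htr2, ← Matrix.mul_assoc, t]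
  have hVV : (V * V).trace = 0 := by
    nth_rw 1 [hVdef]
    simp [Matrix.sub_mul, hX V hVsymm hV hXV, hXV, hV]
  rw [← sub_eq_zero, ← sub_sub]
  exact trace_conjTranspose_mul_self_eq_zero_iff.1
    (by rwa [conjTranspose_eq_transpose_of_trivial, hVsymm])

theorem isTraceCubeCritical_of_mul_self_eq {X : Matrix ι ι ℝ} {s c : ℝ}
    (h : X * X = s • X + c • 1) : IsTraceCubeCritical X := by
  intro V _ hV hXV
  simp [h, Matrix.add_mul, hV, hXV]

end TraceCube

/-- On the sphere `S = {X symmetric : Tr X = 0, Tr X² = 1}` (inner product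
`(X, Y) = Tr (X Y)`), a matrix `X` is a critical point of `f = (1/3) Tr X³` restricted
to `S` — i.e. the differential of `Tr X³` (with ambient gradient `3X²`) vanishes on the
tangent space `T_X S = {V symmetric : Tr V = 0, Tr (X V) = 0}` — iff `X` has exactly two
distinct eigenvalues `μ₁ = -√((n-m)/(nm))` with multiplicity `m` and
`μ₂ = √(m/(n(n-m)))` with multiplicity `n-m`, for some `1 ≤ m ≤ n-1`. -/
theorem critical_points_of_trace_cube (n : ℕ)
    (X : Matrix (Fin n) (Fin n) ℝ) (hsymm : Xᵀ = X)
    (htr : X.trace = 0) (htr2 : (X * X).trace = 1) :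
    (∀ V : Matrix (Fin n) (Fin n) ℝ, Vᵀ = V → V.trace = 0 → (X * V).trace = 0 →
        (X * X * V).trace = 0) ↔
      ∃ m : ℕ, 1 ≤ m ∧ m ≤ n - 1 ∧
        ∃ P : Matrix (Fin n) (Fin n) ℝ, Pᵀ * P = 1 ∧
          X = P * Matrix.diagonal (fun i : Fin n =>
              if (i : ℕ) < m then -Real.sqrt (((n : ℝ) - m) / (n * m))
              else Real.sqrt ((m : ℝ) / (n * ((n : ℝ) - m)))) * Pᵀ := by
  constructor
  · intro hcrit
    obtain ⟨U, f, hU, hXU⟩ := exists_eq_mul_diagonal_mul_transpose_of_transpose_eq hsymm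
    have hf := mul_self_eq_of_eq_mul_diagonal_mul_transpose hU hXU
      (IsTraceCubeCritical.mul_self_eq hcrit hsymm htr htr2)
    have hsum : ∑ i, f i = 0 := by
      rw [← trace_diagonal, ← trace_mul_mul_transpose hU, ← hXU, htr]
    have hsum_sq : ∑ i, f i * f i = 1 := by
      rw [← htr2, hXU, mul_mul_transpose_mul_mul_mul_transpose hU, trace_mul_mul_transpose hU,
        diagonal_mul_diagonal, trace_diagonal]
    obtain ⟨m, hm, hmn, σ, hσ⟩ := Fin.exists_perm_eq_ite_of_mul_self_eq hf hsum hsum_sq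
    obtain ⟨hP, hXP⟩ := eq_mul_diagonal_comp_perm_mul_transpose hU hXU σ
    exact ⟨m, hm, hmn, _, hP, (funext hσ : f ∘ σ = _) ▸ hXP⟩
  · rintro ⟨m, -, -, P, hP, rfl⟩
    exact isTraceCubeCritical_of_mul_self_eq <| mul_self_eq_of_transpose_mul_self_eq_one hP <|
      diagonal_mul_self_eq_iff.2 fun i => mul_self_eq_of_eq_or_eq (ite_eq_or_eq _ _ _)
end
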